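/- Let μ be a probability measure on a sequence space with shift T, and let η be a T-stationary probability measure. Then η asymptotically dominates μ (i.e. η(E)=0 implies lim_{n→∞} μ(T^{-n}E)=0 for all measurable E) if and only if the restriction of μ to the tail σ-field ⋂_{n≥0} T^{-n}B is absolutely continuous with respect to the restriction of η to the tail σ-field. -/

import Mathlib

open MeasureTheory Filter

/-- The one-sided shift on a sequence space. -/
def seqShift {A : Type*} : (ℕ → A) → (ℕ → A) := fun x i => x (i + 1)

/-- The tail σ-field `⋂_{n≥0} T^{-n} F`. -/
def tailSigma (X : Type*) [m : MeasurableSpace X] (T : X → X) : MeasurableSpace X :=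
  ⨅ n : ℕ, m.comap (T^[n])

lemma tailSigma_le (X : Type*) [m : MeasurableSpace X] (T : X → X) :
    tailSigma X T ≤ m := by
  have h := iInf_le (fun n : ℕ => m.comap (T^[n])) 0
  simpa [tailSigma, MeasurableSpace.comap_id] using h

/-!
If `η` is `T`-invariant, a tail set `s = T^{-n} Eₙ` that is `η`-null has `η`-null `Eₙ`, so
`F = ⋃ₙ Eₙ` is `η`-null and `μ s ≤ μ (T^{-n} F) → 0`. Conversely, if `η E = 0` then
`limsup T^{-n} E` is an `η`-null tail set, hence `μ`-null, and by continuity from above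
`μ (T^{-n} E) ≤ μ (⋃_{k ≥ n} T^{-k} E) → 0`.
-/

open Topology

lemma measurable_seqShift {A : Type*} [MeasurableSpace A] :
    Measurable (seqShift (A := A)) :=
  measurable_pi_lambda _ fun i => measurable_pi_apply (i + 1)

lemma measurePreserving_of_measure_preimage_eq {X : Type*} [MeasurableSpace X] {T : X → X}
    {η : Measure X} (hT : Measurable T)
    (hη : ∀ E : Set X, MeasurableSet E → η (T ⁻¹' E) = η E) :
    MeasurePreserving T η η :=
  ⟨hT, Measure.ext fun E hE => by rw [Measure.map_apply hT hE, hη E hE]⟩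

lemma preimage_limsup_nat {α β : Type*} (f : α → β) (s : ℕ → Set β) :
    f ⁻¹' limsup s atTop = limsup (fun n => f ⁻¹' s n) atTop := by
  simp only [limsup_eq_iInf_iSup_of_nat, Set.iInf_eq_iInter, Set.iSup_eq_iUnion,
    Set.preimage_iInter, Set.preimage_iUnion]

lemma tendsto_measure_zero_of_measure_limsup_eq_zero {X : Type*} [MeasurableSpace X]
    {μ : Measure X} [IsFiniteMeasure μ] {s : ℕ → Set X} (hs : ∀ n, MeasurableSet (s n))
    (h : μ (limsup s atTop) = 0) :
    Tendsto (fun n => μ (s n)) atTop (𝓝 0) := by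
  have hU : Tendsto (fun n => μ (⋃ i ≥ n, s i)) atTop (𝓝 (μ (limsup s atTop))) := by
    rw [limsup_eq_iInf_iSup_of_nat]
    exact tendsto_measure_iInter_atTop
      (fun n => (MeasurableSet.biUnion (Set.to_countable _) fun i _ => hs i).nullMeasurableSet)
      (fun m n hmn => Set.iUnion₂_mono' fun i hi => ⟨i, hmn.trans hi, subset_rfl⟩)
      ⟨0, measure_ne_top μ _⟩
  rw [h] at hU
  exact tendsto_of_tendsto_of_tendsto_of_le_of_le tendsto_const_nhds hU (fun _ => zero_le)
    fun n => measure_mono (Set.subset_iUnion₂_of_subset n le_rfl subset_rfl)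

section Tail

variable {X : Type*} [MeasurableSpace X] {T : X → X}

lemma measurableSet_tailSigma_iff {s : Set X} :
    MeasurableSet[tailSigma X T] s ↔ ∀ n, ∃ E, MeasurableSet E ∧ T^[n] ⁻¹' E = s :=
  MeasurableSpace.measurableSet_iInf

lemma measurableSet_tailSigma_limsup_preimage_iterate (hT : Measurable T) {E : Set X}
    (hE : MeasurableSet E) :
    MeasurableSet[tailSigma X T] (limsup (fun n => T^[n] ⁻¹' E) atTop) := by
  refine measurableSet_tailSigma_iff.2 fun m => ⟨limsup (fun n => T^[n] ⁻¹' E) atTop,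
    MeasurableSet.measurableSet_limsup fun n => hT.iterate n hE, ?_⟩
  rw [preimage_limsup_nat]
  simp_rw [← Set.preimage_comp, ← Function.iterate_add]
  exact limsup_nat_add (fun n => T^[n] ⁻¹' E) m

def AsympDominates (T : X → X) (μ η : Measure X) : Prop :=
  ∀ E : Set X, MeasurableSet E → η E = 0 → Tendsto (fun n => μ (T^[n] ⁻¹' E)) atTop (𝓝 0)

variable {μ η : Measure X}

theorem AsympDominates.trim_tailSigma_absolutelyContinuous (hη : MeasurePreserving T η η)
    (hdom : AsympDominates T μ η) :
    μ.trim (tailSigma_le X T) ≪ η.trim (tailSigma_le X T) := by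
  refine Measure.AbsolutelyContinuous.mk fun s hs hηs => ?_
  rw [trim_measurableSet_eq _ hs] at hηs ⊢
  choose E hE hEs using measurableSet_tailSigma_iff.1 hs
  have hEnull (n : ℕ) : η (E n) = 0 := by
    rw [← (hη.iterate n).measure_preimage (hE n).nullMeasurableSet, hEs n, hηs]
  have hle (n : ℕ) : μ s ≤ μ (T^[n] ⁻¹' ⋃ k, E k) :=
    hEs n ▸ measure_mono (Set.preimage_mono (Set.subset_iUnion E n))
  exact nonpos_iff_eq_zero.1 <|
    ge_of_tendsto' (hdom _ (MeasurableSet.iUnion hE) (measure_iUnion_null hEnull)) hle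

theorem AsympDominates.of_trim_tailSigma_absolutelyContinuous [IsFiniteMeasure μ]
    (hη : Measure.QuasiMeasurePreserving T η η)
    (hac : μ.trim (tailSigma_le X T) ≪ η.trim (tailSigma_le X T)) :
    AsympDominates T μ η := by
  intro E hE hηE
  have hT := hη.measurable
  have hG := measurableSet_tailSigma_limsup_preimage_iterate hT hE
  have hηG : η (limsup (fun n => T^[n] ⁻¹' E) atTop) = 0 :=
    measure_limsup_atTop_eq_zero <| by simp [(hη.iterate _).preimage_null hηE]
  have hμG := hac (by rwa [trim_measurableSet_eq _ hG])
  rw [trim_measurableSet_eq _ hG] at hμG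
  exact tendsto_measure_zero_of_measure_limsup_eq_zero (fun n => hT.iterate n hE) hμG

end Tail

theorem asympDominates_iff_tail_ac_general {A : Type*} [MeasurableSpace A]
    (μ η : Measure (ℕ → A)) [IsProbabilityMeasure μ]
    (hη : ∀ E : Set (ℕ → A), MeasurableSet E → η (seqShift ⁻¹' E) = η E) :
    (∀ E : Set (ℕ → A), MeasurableSet E → η E = 0 →
        Tendsto (fun n : ℕ => μ ((seqShift^[n]) ⁻¹' E)) atTop (nhds 0)) ↔
      μ.trim (tailSigma_le _ seqShift) ≪ η.trim (tailSigma_le _ seqShift) := by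
  have hηT : MeasurePreserving seqShift η η :=
    measurePreserving_of_measure_preimage_eq measurable_seqShift hη
  exact ⟨AsympDominates.trim_tailSigma_absolutelyContinuous hηT,
    AsympDominates.of_trim_tailSigma_absolutelyContinuous hηT.quasiMeasurePreserving⟩

/-- A stationary probability `η` asymptotically dominates `μ` iff the restriction of `μ` to
the tail σ-field is absolutely continuous w.r.t. the restriction of `η` to the tail σ-field. -/
theorem asympDominates_iff_tail_ac {A : Type*} [MeasurableSpace A]
    (μ η : Measure (ℕ → A)) [IsProbabilityMeasure μ] [IsProbabilityMeasure η]
    (hη : ∀ E : Set (ℕ → A), MeasurableSet E → η (seqShift ⁻¹' E) = η E) :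
    (∀ E : Set (ℕ → A), MeasurableSet E → η E = 0 →
        Tendsto (fun n : ℕ => μ ((seqShift^[n]) ⁻¹' E)) atTop (nhds 0)) ↔
      μ.trim (tailSigma_le _ seqShift) ≪ η.trim (tailSigma_le _ seqShift) :=
  asympDominates_iff_tail_ac_general μ η hη
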